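/- arXiv:2202.02360 — 3 statements merged into one kernel-verified Lean document; each statement's English description precedes it below -/
import Mathlib

section
/- For d ≥ 1 and 1 ≤ s ≤ 2^d, the maximum of Π_{k=1}^d (2ι_k + 1) over multi-indices ι ∈ ℕ₀^d with Π_{k=1}^d (ι_k + 1) ≤ s satisfies s^{log 3/log 2}/3 ≤ max_ι Π_k (2ι_k+1) ≤ s^{log 3/log 2}. -/
private lemma log2_pos : 0 < Real.log 2 := Real.log_pos (by norm_num)

private lemma alpha_pos : 0 < Real.log 3 / Real.log 2 :=
  div_pos (Real.log_pos (by norm_num)) log2_pos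

private lemma two_rpow_alpha : (2:ℝ) ^ (Real.log 3 / Real.log 2) = 3 := by
  rw [Real.rpow_def_of_pos (by norm_num : (0:ℝ) < 2), mul_comm,
    div_mul_cancel₀ _ (ne_of_gt log2_pos)]
  exact Real.exp_log (by norm_num)

private lemma three_le_two_alpha : (3:ℝ) ≤ Real.log 3 / Real.log 2 * 2 := by
  rw [div_mul_eq_mul_div, le_div_iff₀ log2_pos]
  have h : Real.log 8 ≤ Real.log 9 := Real.log_le_log (by norm_num) (by norm_num)
  have h8 : Real.log 8 = 3 * Real.log 2 := by
    rw [show (8:ℝ) = 2^(3:ℕ) by norm_num, Real.log_pow]; push_cast; ring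
  have h9 : Real.log 9 = 2 * Real.log 3 := by
    rw [show (9:ℝ) = 3^(2:ℕ) by norm_num, Real.log_pow]; push_cast; ring
  nlinarith

private lemma key_coord (n : ℕ) :
    ((2*n+1 : ℕ) : ℝ) ≤ ((n+1 : ℕ) : ℝ) ^ (Real.log 3 / Real.log 2) := by
  set α := Real.log 3 / Real.log 2 with hα
  match n with
  | 0 => simp
  | 1 =>
      have : ((1+1 : ℕ) : ℝ) = 2 := by norm_num
      rw [this, two_rpow_alpha]; norm_num
  | (n+2) =>
      set x : ℝ := ((n+2+1 : ℕ) : ℝ) with hx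
      have hx1 : (1:ℝ) ≤ x := by rw [hx]; push_cast; linarith
      have hx0 : (0:ℝ) ≤ x := by linarith
      have ha : (0:ℝ) ≤ ((2*(n+2)+1 : ℕ) : ℝ) := by positivity
      have hb : (0:ℝ) ≤ x ^ α := Real.rpow_nonneg hx0 α
      have hsq : ((2*(n+2)+1 : ℕ) : ℝ)^2 ≤ (x ^ α)^2 := by
        have h1 : ((2*(n+2)+1 : ℕ) : ℝ)^2 ≤ x ^ (3:ℕ) := by
          rw [hx]; push_cast; nlinarith [Nat.cast_nonneg (α := ℝ) n, sq_nonneg ((n:ℝ))]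
        have h2 : x ^ ((3:ℕ):ℝ) ≤ x ^ (α * 2) := by
          apply Real.rpow_le_rpow_of_exponent_le hx1
          push_cast; exact three_le_two_alpha
        calc ((2*(n+2)+1 : ℕ) : ℝ)^2 ≤ x ^ (3:ℕ) := h1
          _ = x ^ ((3:ℕ):ℝ) := (Real.rpow_natCast x 3).symm
          _ ≤ x ^ (α * 2) := h2
          _ = (x ^ α) ^ (2:ℝ) := Real.rpow_mul hx0 α 2
          _ = (x ^ α) ^ 2 := by
              rw [show (2:ℝ) = ((2:ℕ):ℝ) by norm_num, Real.rpow_natCast]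
      exact (pow_le_pow_iff_left₀ ha hb two_ne_zero).mp hsq

/-- For `d ≥ 1` and `1 ≤ s ≤ 2^d`, the maximum of `∏_k (2ι_k + 1)` over the hyperbolic
cross `{ι ∈ ℕ₀^d : ∏_k (ι_k + 1) ≤ s}` satisfies
`s^{log 3/log 2}/3 ≤ max ≤ s^{log 3/log 2}`. -/
theorem hyperbolic_cross_Theta_sq_bounds (d s : ℕ) (hd : 1 ≤ d) (hs : 1 ≤ s)
    (hs' : s ≤ 2 ^ d) :
    (∀ ι : Fin d → ℕ, ∏ k, (ι k + 1) ≤ s →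
        ((∏ k, (2 * ι k + 1) : ℕ) : ℝ) ≤ (s : ℝ) ^ (Real.log 3 / Real.log 2)) ∧
      (∃ ι : Fin d → ℕ, ∏ k, (ι k + 1) ≤ s ∧
        (s : ℝ) ^ (Real.log 3 / Real.log 2) / 3 ≤ ((∏ k, (2 * ι k + 1) : ℕ) : ℝ)) := by
  set α := Real.log 3 / Real.log 2 with hα
  constructor
  · intro ι hι
    calc ((∏ k, (2 * ι k + 1) : ℕ) : ℝ) = ∏ k, ((2 * ι k + 1 : ℕ) : ℝ) := by
          push_cast; rfl
      _ ≤ ∏ k, ((ι k + 1 : ℕ) : ℝ) ^ α := by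
          apply Finset.prod_le_prod
          · intro i _; positivity
          · intro i _; exact key_coord (ι i)
      _ = (∏ k, ((ι k + 1 : ℕ) : ℝ)) ^ α :=
          Real.finset_prod_rpow _ _ (fun i _ => by positivity) α
      _ ≤ (s : ℝ) ^ α := by
          apply Real.rpow_le_rpow (by positivity) _ (le_of_lt alpha_pos)
          rw [show (∏ k, ((ι k + 1 : ℕ) : ℝ)) = ((∏ k, (ι k + 1) : ℕ) : ℝ) by push_cast; rfl]
          exact_mod_cast hι
  · set m := Nat.log 2 s with hm
    have hm1 : 2 ^ m ≤ s := Nat.pow_log_le_self 2 (by omega)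
    have hm2 : s < 2 ^ (m+1) := Nat.lt_pow_succ_log_self (by norm_num) s
    have hmd : m ≤ d := by
      by_contra h
      push_neg at h
      have : 2 ^ d < 2 ^ m := Nat.pow_lt_pow_right (by norm_num) h
      omega
    have hfilt : Finset.filter (fun i => i < m) (Finset.range d) = Finset.range m := by
      ext i; simp; omega
    have key2 : ∀ a : ℕ, (∏ k : Fin d, (if (k:ℕ) < m then a else 1)) = a ^ m := by
      intro a
      rw [Fin.prod_univ_eq_prod_range (fun i => if i < m then a else 1) d,
        Finset.prod_ite, hfilt, Finset.prod_const, Finset.prod_const, one_pow, mul_one,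
        Finset.card_range]
    refine ⟨fun k => if (k:ℕ) < m then 1 else 0, ?_, ?_⟩
    · have : (∏ k : Fin d, ((if (k:ℕ) < m then 1 else 0) + 1)) = 2 ^ m := by
        rw [← key2 2]
        apply Finset.prod_congr rfl
        intro i _; split_ifs <;> rfl
      rw [this]; exact hm1
    · have hp : (∏ k : Fin d, (2 * (if (k:ℕ) < m then 1 else 0) + 1)) = 3 ^ m := by
        rw [← key2 3]
        apply Finset.prod_congr rfl
        intro i _; split_ifs <;> rfl
      rw [hp]
      have hcast : ((3^m : ℕ) : ℝ) = (3:ℝ) ^ m := by push_cast; rfl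
      rw [hcast, div_le_iff₀ (by norm_num : (0:ℝ) < 3)]
      have hsle : (s:ℝ) ≤ (2:ℝ) ^ (m+1) := by
        have := hm2.le
        exact_mod_cast this
      calc (s:ℝ) ^ α ≤ ((2:ℝ) ^ (m+1)) ^ α :=
            Real.rpow_le_rpow (by positivity) hsle (le_of_lt alpha_pos)
        _ = (3:ℝ) ^ (m+1) := by
            rw [← Real.rpow_natCast 2 (m+1), ← Real.rpow_mul (by norm_num), mul_comm,
              Real.rpow_mul (by norm_num), hα, two_rpow_alpha, Real.rpow_natCast]
        _ = (3:ℝ) ^ m * 3 := by ring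
end

section
/- The union of all lower (downward-closed) subsets S ⊂ ℕ₀^d with |S| ≤ s equals the hyperbolic cross index set I^{HC}_{s-1} = {ι ∈ ℕ₀^d : Π_{k=1}^d (ι_k + 1) ≤ s}. -/
/-- The union of all lower (downward-closed) subsets `S ⊆ ℕ₀^d` of cardinality at most `s`
is the hyperbolic cross `{ι : ∏_k (ι_k + 1) ≤ s}`: a multi-index `ι` belongs to some lower
set of cardinality at most `s` iff `∏_k (ι_k + 1) ≤ s`. -/
theorem union_lower_sets_eq_hyperbolic_cross (d s : ℕ) (ι : Fin d → ℕ) :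
    (∃ S : Finset (Fin d → ℕ),
        (∀ a ∈ S, ∀ b : Fin d → ℕ, (∀ k, b k ≤ a k) → b ∈ S) ∧
        S.card ≤ s ∧ ι ∈ S) ↔
      ∏ k, (ι k + 1) ≤ s := by
  have hbox : ∀ b : Fin d → ℕ,
      b ∈ Fintype.piFinset (fun k => Finset.range (ι k + 1)) ↔ ∀ k, b k ≤ ι k := by
    intro b
    simp [Fintype.mem_piFinset, Nat.lt_succ_iff]
  have hcard : (Fintype.piFinset (fun k => Finset.range (ι k + 1))).card
      = ∏ k, (ι k + 1) := by
    simp [Fintype.card_piFinset]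
  constructor
  · rintro ⟨S, hlow, hcardS, hι⟩
    have hsub : Fintype.piFinset (fun k => Finset.range (ι k + 1)) ⊆ S := by
      intro b hb
      exact hlow ι hι b ((hbox b).1 hb)
    calc ∏ k, (ι k + 1) = _ := hcard.symm
      _ ≤ S.card := Finset.card_le_card hsub
      _ ≤ s := hcardS
  · intro h
    refine ⟨Fintype.piFinset (fun k => Finset.range (ι k + 1)), ?_, ?_, ?_⟩
    · intro a ha b hb
      exact (hbox b).2 fun k => le_trans (hb k) ((hbox a).1 ha k)
    · rw [hcard]; exact h
    · exact (hbox ι).2 fun k => le_refl _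
end

section
/- Let A ∈ ℂ^{m×n} and V a complex Hilbert space; extend A to V^n → V^m by (Ac)_i = Σ_j A_{ij} c_j. Suppose A satisfies a two-sided bound aα‖c‖²_{ℓ²(V)} ≤ ‖Ac‖²_{ℓ²(V)} ≤ bβ‖c‖²_{ℓ²(V)} for all t-sparse c ∈ V^n, where t = 2⌈4s·bβ/(aα)⌉ ≤ n and s ≥ 1. Then A satisfies the robust null space property of order s over V^n with constants ρ = 1/2 and τ = 1/√(aα): for every c ∈ V^n and every S ⊆ [n] with |S| ≤ s, ‖c_S‖_{ℓ²(V)} ≤ (1/(2√s))‖c_{S^c}‖_{ℓ¹(V)} + (1/√(aα))‖Ac‖_{ℓ²(V)}. -/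
/-!
Sort the entries of `c` outside `S` by decreasing norm and cut them into consecutive blocks
`T₀, T₁, …` of size `r = ⌈4s·bβ/(aα)⌉`. The vector `c_{S ∪ T₀}` is `t`-sparse and `c - c_{S ∪ T₀}`
is the sum of the `r`-sparse vectors `c_{T_k}`, `k ≥ 1`, so
`√(aα) ‖c_{S ∪ T₀}‖₂ ≤ ‖A c‖ + ∑_{k ≥ 1} ‖A c_{T_k}‖ ≤ ‖A c‖ + √(bβ) ∑_{k ≥ 1} ‖c_{T_k}‖₂`.
Every entry of `T_{k+1}` is at most the mean of the entries of `T_k`, whence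
`‖c_{T_{k+1}}‖₂ ≤ ‖c_{T_k}‖₁ / √r` and the last sum is at most `‖c_{Sᶜ}‖₁ / √r`;
the choice of `r` makes `√(bβ) / √(aα r) ≤ 1 / (2√s)`.
-/

open Finset Function

section Shelling

variable {ι : Type*}

theorem sqrt_card_mul_sqrt_sum_sq_le_sum {U W : Finset ι} {y : ι → ℝ} (hy : 0 ≤ y)
    (hUW : #U ≤ #W) (hle : ∀ i ∈ U, ∀ j ∈ W, y i ≤ y j) :
    √(#W : ℝ) * √(∑ i ∈ U, y i ^ 2) ≤ ∑ j ∈ W, y j := by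
  set Y := ∑ j ∈ W, y j
  have hY : 0 ≤ Y := sum_nonneg fun j _ => hy j
  have hterm : ∀ i ∈ U, ((#W : ℝ) * y i) ^ 2 ≤ Y ^ 2 := fun i hi => by
    have := card_nsmul_le_sum W y (y i) (hle i hi)
    rw [nsmul_eq_mul] at this
    exact pow_le_pow_left₀ (mul_nonneg (Nat.cast_nonneg _) (hy i)) this 2
  have hsq : (#W : ℝ) * ∑ i ∈ U, y i ^ 2 ≤ Y ^ 2 := by
    rcases (Nat.cast_nonneg (α := ℝ) #W).eq_or_lt with hW | hW
    · rw [← hW, zero_mul]; positivity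
    · refine le_of_mul_le_mul_left ?_ hW
      calc (#W : ℝ) * ((#W : ℝ) * ∑ i ∈ U, y i ^ 2) = ∑ i ∈ U, ((#W : ℝ) * y i) ^ 2 := by
            rw [← mul_assoc, mul_sum]; ring_nf
        _ ≤ #U * Y ^ 2 := by simpa using sum_le_sum hterm
        _ ≤ #W * Y ^ 2 := by gcongr
  calc √(#W : ℝ) * √(∑ i ∈ U, y i ^ 2) = √((#W : ℝ) * ∑ i ∈ U, y i ^ 2) :=
        (Real.sqrt_mul (Nat.cast_nonneg _) _).symm
    _ ≤ √(Y ^ 2) := Real.sqrt_le_sqrt hsq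
    _ = Y := Real.sqrt_sq hY

def finBlock (M r k : ℕ) : Finset (Fin M) := {j | (j : ℕ) / r = k}

variable {M r : ℕ}

theorem map_valEmbedding_finBlock (hr : 0 < r) (k : ℕ) :
    (finBlock M r k).map Fin.valEmbedding = Ico (k * r) (min (k * r + r) M) := by
  ext x
  simp only [finBlock, mem_map, mem_filter, mem_univ, true_and, Fin.valEmbedding_apply,
    mem_Ico, lt_min_iff, Nat.div_eq_iff hr]
  constructor
  · rintro ⟨j, hj, rfl⟩; omega
  · intro hx; exact ⟨⟨x, hx.2.2⟩, by simp only; omega, rfl⟩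

theorem card_finBlock (hr : 0 < r) (k : ℕ) : #(finBlock M r k) = min (k * r + r) M - k * r := by
  rw [← card_map Fin.valEmbedding, map_valEmbedding_finBlock hr, Nat.card_Ico]

theorem card_finBlock_le (hr : 0 < r) (k : ℕ) : #(finBlock M r k) ≤ r := by
  rw [card_finBlock hr]; omega

theorem card_finBlock_of_nonempty_succ (hr : 0 < r) {k : ℕ} (h : (finBlock M r (k + 1)).Nonempty) :
    #(finBlock M r k) = r := by
  obtain ⟨j, hj⟩ := h
  have : (k + 1) * r ≤ j := ((Nat.div_eq_iff hr).1 (mem_filter.1 hj).2).1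
  rw [card_finBlock hr, add_one_mul] at *
  omega

theorem sum_sum_finBlock {β : Type*} [AddCommMonoid β] {N : ℕ} (hMN : M ≤ N) (f : Fin M → β) :
    ∑ k ∈ range N, ∑ j ∈ finBlock M r k, f j = ∑ j, f j :=
  sum_fiberwise_of_maps_to
    (fun j _ => mem_range.2 ((Nat.div_le_self _ _).trans_lt (j.2.trans_le hMN))) f

theorem sqrt_mul_sum_sqrt_sum_sq_finBlock_succ_le (hr : 0 < r) {y : Fin M → ℝ} (hy : 0 ≤ y)
    (hanti : Antitone y) :
    √(r : ℝ) * ∑ k ∈ range M, √(∑ j ∈ finBlock M r (k + 1), y j ^ 2) ≤ ∑ j, y j := by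
  rw [mul_sum, ← sum_sum_finBlock (r := r) le_rfl]
  refine sum_le_sum fun k _ => ?_
  rcases (finBlock M r (k + 1)).eq_empty_or_nonempty with h | h
  · simpa [h] using sum_nonneg fun j _ => hy j
  · have hfull := card_finBlock_of_nonempty_succ hr h
    rw [show (r : ℝ) = #(finBlock M r k) by rw [hfull]]
    refine sqrt_card_mul_sqrt_sum_sq_le_sum hy (hfull.symm ▸ card_finBlock_le hr _)
      fun i hi j hj => hanti ?_
    refine (Nat.lt_of_div_lt_div (c := r) ?_).le
    rw [(mem_filter.1 hi).2, (mem_filter.1 hj).2]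
    exact k.lt_succ_self

end Shelling

theorem Finset.exists_embedding_antitone {ι α : Type*} [LinearOrder α] (s : Finset ι)
    (f : ι → α) : ∃ e : Fin #s ↪ ι, univ.map e = s ∧ Antitone (f ∘ e) := by
  let e₀ : Fin #s ≃ s := s.equivFin.symm
  let σ := Tuple.sort (OrderDual.toDual ∘ f ∘ (↑) ∘ e₀)
  refine ⟨(σ.trans e₀).toEmbedding.trans (Embedding.subtype _), ?_, ?_⟩
  · ext i
    simp only [mem_map, mem_univ, true_and, Embedding.trans_apply, Equiv.coe_toEmbedding,
      Equiv.trans_apply, Embedding.subtype_apply]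
    exact ⟨by rintro ⟨j, rfl⟩; exact (e₀ (σ j)).2,
      fun hi => ⟨σ.symm (e₀.symm ⟨i, hi⟩), by simp⟩⟩
  · rw [← monotone_toDual_comp_iff]
    exact Tuple.monotone_sort (OrderDual.toDual ∘ f ∘ Subtype.val ∘ e₀)

section Indicator

variable {ι V : Type*}

theorem Finset.indicator_eq_sum_single [DecidableEq ι] [AddCommMonoid V] (U : Finset ι)
    (c : ι → V) : (U : Set ι).indicator c = ∑ i ∈ U, Pi.single i (c i) := by
  ext j; simp [sum_pi_single, Set.indicator_apply]

theorem Finset.sum_norm_indicator_sq [Fintype ι] [SeminormedAddCommGroup V] (U : Finset ι)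
    (c : ι → V) : ∑ i, ‖(U : Set ι).indicator c i‖ ^ 2 = ∑ i ∈ U, ‖c i‖ ^ 2 := by
  classical
  simp [Set.indicator_apply, apply_ite, sum_ite_mem]

theorem Finset.ncard_support_indicator_le [Zero V] (U : Finset ι) (c : ι → V) :
    (support ((U : Set ι).indicator c)).ncard ≤ #U :=
  (Set.ncard_le_ncard Set.support_indicator_subset U.finite_toSet).trans (Set.ncard_coe_finset U).le

end Indicator

theorem indicator_union_add_sum_indicator_finBlock {ι V : Type*} [Fintype ι] [DecidableEq ι]
    [AddCommGroup V] {M : ℕ} (r : ℕ) {S : Finset ι} {e : Fin M ↪ ι} (he : univ.map e = Sᶜ)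
    (c : ι → V) :
    (↑(S ∪ (finBlock M r 0).map e) : Set ι).indicator c +
      ∑ k ∈ range M, (↑((finBlock M r (k + 1)).map e) : Set ι).indicator c = c := by
  have hST : Disjoint S ((finBlock M r 0).map e) :=
    disjoint_of_subset_right ((map_subset_map.2 (subset_univ _)).trans he.le) disjoint_compl_right
  have hSc : (↑Sᶜ : Set ι).indicator c =
      ∑ k ∈ range (M + 1), (↑((finBlock M r k).map e) : Set ι).indicator c := by
    simp_rw [← he, indicator_eq_sum_single, sum_map]
    exact (sum_sum_finBlock M.le_succ _).symm
  rw [sum_range_succ', coe_compl] at hSc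
  conv_rhs => rw [← Set.indicator_self_add_compl (↑S) c, hSc]
  rw [coe_union, Set.indicator_union_of_disjoint (disjoint_coe.2 hST)]
  ext i
  simp only [Pi.add_apply]
  abel

theorem sqrt_mul_sqrt_sum_sq_le_of_sparse_bounds {ι V E : Type*} [Fintype ι] [DecidableEq ι]
    [SeminormedAddCommGroup V] [SeminormedAddCommGroup E] (Φ : (ι → V) →+ E) {p q : ℝ} {r : ℕ}
    (hr : 0 < r) (S : Finset ι)
    (hlow : ∀ c : ι → V, (support c).ncard ≤ #S + r → p * ∑ i, ‖c i‖ ^ 2 ≤ ‖Φ c‖ ^ 2)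
    (hup : ∀ c : ι → V, (support c).ncard ≤ r → ‖Φ c‖ ^ 2 ≤ q * ∑ i, ‖c i‖ ^ 2) (c : ι → V) :
    √p * √(∑ i ∈ S, ‖c i‖ ^ 2) ≤ ‖Φ c‖ + √q / √r * ∑ i ∈ Sᶜ, ‖c i‖ := by
  obtain ⟨e, he, hanti⟩ := Sᶜ.exists_embedding_antitone (fun i => ‖c i‖)
  set T : ℕ → Finset ι := fun k => (finBlock #Sᶜ r k).map e
  set B := S ∪ T 0
  have hB : √p * √(∑ i ∈ B, ‖c i‖ ^ 2) ≤ ‖Φ ((↑B : Set ι).indicator c)‖ := by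
    rw [← Real.sqrt_mul' _ (by positivity), ← sum_norm_indicator_sq]
    refine Real.sqrt_le_iff.2 ⟨norm_nonneg _, hlow _ ((ncard_support_indicator_le _ _).trans ?_)⟩
    exact (card_union_le _ _).trans (by simpa [T] using card_finBlock_le hr 0)
  have hT (k : ℕ) : ‖Φ ((↑(T k) : Set ι).indicator c)‖ ≤ √q * √(∑ i ∈ T k, ‖c i‖ ^ 2) := by
    rw [← Real.sqrt_mul' _ (by positivity), ← sum_norm_indicator_sq]
    refine Real.le_sqrt_of_sq_le (hup _ ((ncard_support_indicator_le _ _).trans ?_))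
    simpa [T] using card_finBlock_le hr k
  have hshell : √r * ∑ k ∈ range #Sᶜ, √(∑ i ∈ T (k + 1), ‖c i‖ ^ 2) ≤ ∑ i ∈ Sᶜ, ‖c i‖ := by
    have hL1 : ∑ i ∈ Sᶜ, ‖c i‖ = ∑ j, ‖c (e j)‖ := by
      conv_lhs => rw [← he]
      exact sum_map _ _ _
    rw [hL1]
    simpa only [T, sum_map] using
      sqrt_mul_sum_sqrt_sum_sq_finBlock_succ_le hr (fun _ => norm_nonneg _) hanti
  have hr' : √(r : ℝ) ≠ 0 := by positivity
  calc √p * √(∑ i ∈ S, ‖c i‖ ^ 2) ≤ √p * √(∑ i ∈ B, ‖c i‖ ^ 2) := by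
        gcongr; exact subset_union_left
    _ ≤ ‖Φ ((↑B : Set ι).indicator c)‖ := hB
    _ = ‖Φ c - ∑ k ∈ range #Sᶜ, Φ ((↑(T (k + 1)) : Set ι).indicator c)‖ := by
        rw [← map_sum, ← map_sub, ← eq_sub_of_add_eq
          (indicator_union_add_sum_indicator_finBlock r he c)]
    _ ≤ ‖Φ c‖ + ∑ k ∈ range #Sᶜ, ‖Φ ((↑(T (k + 1)) : Set ι).indicator c)‖ :=
        (norm_sub_le _ _).trans (add_le_add le_rfl (norm_sum_le _ _))
    _ ≤ ‖Φ c‖ + √q / √r * (√r * ∑ k ∈ range #Sᶜ, √(∑ i ∈ T (k + 1), ‖c i‖ ^ 2)) := by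
        rw [← mul_assoc, div_mul_cancel₀ _ hr', mul_sum]
        gcongr with k
        exact hT _
    _ ≤ ‖Φ c‖ + √q / √r * ∑ i ∈ Sᶜ, ‖c i‖ := by gcongr

def Matrix.mulVecL2 {m n R V : Type*} [Fintype m] [Fintype n] [Semiring R]
    [SeminormedAddCommGroup V] [Module R V] (A : Matrix m n R) :
    (n → V) →+ PiLp 2 (fun _ : m => V) :=
  AddMonoidHom.mk' (fun c => WithLp.toLp 2 fun i => ∑ j, A i j • c j) fun c d => by
    ext i; simp [smul_add, sum_add_distrib]

theorem Matrix.norm_mulVecL2_sq {m n R V : Type*} [Fintype m] [Fintype n] [Semiring R]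
    [SeminormedAddCommGroup V] [Module R V] (A : Matrix m n R) (c : n → V) :
    ‖A.mulVecL2 c‖ ^ 2 = ∑ i, ‖∑ j, A i j • c j‖ ^ 2 :=
  PiLp.norm_sq_eq_of_L2 _ _

theorem sqrt_div_sqrt_le_sqrt_div_two_mul_sqrt {p q r s : ℝ} (hp : 0 ≤ p) (hr : 0 < r)
    (hs : 0 < s) (h : 4 * s * q ≤ p * r) : √q / √r ≤ √p / (2 * √s) := by
  rw [div_le_div_iff₀ (by positivity) (by positivity), ← Real.sqrt_mul hp]
  calc √q * (2 * √s) = √(4 * s * q) := by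
        rw [Real.sqrt_mul (by positivity), Real.sqrt_mul zero_le_four,
          show (4 : ℝ) = 2 ^ 2 by norm_num, Real.sqrt_sq zero_le_two]
        ring
    _ ≤ √(p * r) := Real.sqrt_le_sqrt h

theorem rnsp_of_two_sided_sparse_bound_general
    (m n s : ℕ) (hs : 1 ≤ s)
    (V : Type*) [NormedAddCommGroup V] [InnerProductSpace ℂ V]
    (A : Matrix (Fin m) (Fin n) ℂ)
    (a b α β : ℝ) (ha : 0 < a) (hα : 0 < α) (hb : a ≤ b) (hβ : α ≤ β)
    (t : ℕ) (ht : t = 2 * ⌈4 * s * (b * β) / (a * α)⌉₊)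
    (hbound : ∀ c : Fin n → V, Set.ncard {i | c i ≠ 0} ≤ t →
      a * α * ∑ i, ‖c i‖ ^ 2 ≤ ∑ i, ‖∑ j, A i j • c j‖ ^ 2 ∧
      ∑ i, ‖∑ j, A i j • c j‖ ^ 2 ≤ b * β * ∑ i, ‖c i‖ ^ 2) :
    ∀ c : Fin n → V, ∀ S : Finset (Fin n), S.card ≤ s →
      Real.sqrt (∑ i ∈ S, ‖c i‖ ^ 2) ≤
        (1 / (2 * Real.sqrt s)) * ∑ i ∈ Sᶜ, ‖c i‖ +
          (1 / Real.sqrt (a * α)) * Real.sqrt (∑ i, ‖∑ j, A i j • c j‖ ^ 2) := by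
  intro c S hS
  set r := ⌈4 * s * (b * β) / (a * α)⌉₊
  have haα : 0 < a * α := mul_pos ha hα
  have hr : 4 * s ≤ r := by
    have : (4 * s : ℝ) ≤ 4 * s * (b * β) / (a * α) := by
      rw [le_div_iff₀ haα]
      exact mul_le_mul_of_nonneg_left (mul_le_mul hb hβ hα.le (ha.le.trans hb)) (by positivity)
    exact (Nat.cast_le (α := ℝ)).1 (by push_cast; exact this.trans (Nat.le_ceil _))
  have hr0 : 0 < r := by omega
  have key := sqrt_mul_sqrt_sum_sq_le_of_sparse_bounds (A.mulVecL2 (V := V)) hr0 S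
    (fun d hd => A.norm_mulVecL2_sq d ▸ (hbound d (hd.trans (by omega))).1)
    (fun d hd => A.norm_mulVecL2_sq d ▸ (hbound d (hd.trans (by omega))).2) c
  have hconst := sqrt_div_sqrt_le_sqrt_div_two_mul_sqrt haα.le (Nat.cast_pos.2 hr0)
    (Nat.cast_pos.2 hs)
    (by rw [← div_le_iff₀' haα]; exact Nat.le_ceil _ : 4 * s * (b * β) ≤ a * α * r)
  rw [← Real.sqrt_sq (norm_nonneg (A.mulVecL2 c)), A.norm_mulVecL2_sq] at key
  have hP : 0 < √(a * α) := Real.sqrt_pos.2 haα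
  refine le_of_mul_le_mul_left ?_ hP
  calc √(a * α) * √(∑ i ∈ S, ‖c i‖ ^ 2)
      ≤ √(∑ i, ‖∑ j, A i j • c j‖ ^ 2) + √(b * β) / √r * ∑ i ∈ Sᶜ, ‖c i‖ := key
    _ ≤ √(∑ i, ‖∑ j, A i j • c j‖ ^ 2) + √(a * α) / (2 * √s) * ∑ i ∈ Sᶜ, ‖c i‖ := by gcongr
    _ = √(a * α) * (1 / (2 * √s) * ∑ i ∈ Sᶜ, ‖c i‖ +
          1 / √(a * α) * √(∑ i, ‖∑ j, A i j • c j‖ ^ 2)) := by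
        field_simp
        ring

/-- A matrix satisfying a two-sided `ℓ²` bound on `t`-sparse Hilbert-valued vectors, with
`t = 2⌈4s·bβ/(aα)⌉ ≤ n`, satisfies the robust null space property of order `s` over `V^n`
with constants `ρ = 1/2` and `τ = 1/√(aα)`. -/
theorem rnsp_of_two_sided_sparse_bound
    (m n s : ℕ) (hs : 1 ≤ s)
    (V : Type*) [NormedAddCommGroup V] [InnerProductSpace ℂ V] [CompleteSpace V]
    (A : Matrix (Fin m) (Fin n) ℂ)
    (a b α β : ℝ) (ha : 0 < a) (hα : 0 < α) (hb : a ≤ b) (hβ : α ≤ β)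
    (t : ℕ) (ht : t = 2 * ⌈4 * s * (b * β) / (a * α)⌉₊) (htn : t ≤ n)
    (hbound : ∀ c : Fin n → V, Set.ncard {i | c i ≠ 0} ≤ t →
      a * α * ∑ i, ‖c i‖ ^ 2 ≤ ∑ i, ‖∑ j, A i j • c j‖ ^ 2 ∧
      ∑ i, ‖∑ j, A i j • c j‖ ^ 2 ≤ b * β * ∑ i, ‖c i‖ ^ 2) :
    ∀ c : Fin n → V, ∀ S : Finset (Fin n), S.card ≤ s →
      Real.sqrt (∑ i ∈ S, ‖c i‖ ^ 2) ≤
        (1 / (2 * Real.sqrt s)) * ∑ i ∈ Sᶜ, ‖c i‖ +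
          (1 / Real.sqrt (a * α)) * Real.sqrt (∑ i, ‖∑ j, A i j • c j‖ ^ 2) :=
  rnsp_of_two_sided_sparse_bound_general m n s hs V A a b α β ha hα hb hβ t ht hbound
end
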